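/- Let K be a generic closed oriented singular curve in ℝP² whose only singularities are cusps of type 1. At a type 1 cusp of K, the orientations of the tangent geodesic τ_p and the normal geodesic ν_p both reverse as the cusp is traversed, and consequently the black-and-white coloring of the tangent-normal frame F_p is well-defined (unchanged) as p passes through the cusp point. (This fails if type 2 cusps are allowed.) -/

import Mathlib

/-!
Common setting: the real projective plane `ℝP²` is modelled by the unit sphere in
Euclidean 3-space `V3`, with antipodal points identified (`projEq`), endowed with the
spherical metric inherited from the round 2-sphere of radius 1.  Geodesics (projective
lines) are intersections of the sphere with planes through the origin and are recorded
by their poles; the duality of `ℝP²` sends the line with pole `m` to the point `[m]`.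
A closed curve in `ℝP²` is recorded by a smooth unit-sphere lift which is periodic or
antiperiodic of period 1.
-/

open Real Set Filter Topology RealInnerProductSpace
open scoped Classical

noncomputable section

/-- Euclidean 3-space, the ambient space of the unit sphere double covering `ℝP²`. -/
abbrev V3 := EuclideanSpace ℝ (Fin 3)

/-- The cross product on `V3`. -/
def cross (x y : V3) : V3 :=
  (EuclideanSpace.equiv (Fin 3) ℝ).symm
    ![x 1 * y 2 - x 2 * y 1, x 2 * y 0 - x 0 * y 2, x 0 * y 1 - x 1 * y 0]

/-- Two vectors represent the same point of `ℝP²`. -/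
def projEq (x y : V3) : Prop := x = y ∨ x = -y

/-- `y` is a nonzero multiple of `x`; for poles this means "the same projective line". -/
def Parallel (x y : V3) : Prop := x ≠ 0 ∧ y ≠ 0 ∧ ∃ c : ℝ, y = c • x

/-- A sign, taken to be `1` at `0`. -/
def posSign (a : ℝ) : ℝ := if 0 ≤ a then 1 else -1

/-- A fundamental domain of parameters: a closed curve of period 1 is traversed once as
the parameter runs over `Dom`. -/
def Dom : Set ℝ := Set.Ico 0 1

/-- The open sector (pair of vertically opposite sectors, a well-defined region of `ℝP²`)
cut out by the two projective lines with poles `m₁`, `m₂` and a choice of signs. -/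
def sector (m₁ m₂ : V3) (ε₁ ε₂ : ℝ) : Set V3 :=
  {x | 0 < ε₁ * ⟪m₁, x⟫ ∧ 0 < ε₂ * ⟪m₂, x⟫}

/-- A closed oriented curve in `ℝP²`: a smooth unit-sphere lift, periodic or antiperiodic
of period `1`.  (The curve is smooth as a map but may have cusps, i.e. points where the
velocity vanishes.) -/
structure RPCurve where
  γ : ℝ → V3
  smooth : ContDiff ℝ (⊤ : ℕ∞) γ
  unit : ∀ t, ‖γ t‖ = 1
  closed : (∀ t, γ (t + 1) = γ t) ∨ (∀ t, γ (t + 1) = -γ t)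

namespace RPCurve

variable (K : RPCurve)

/-- Velocity. -/
def vel (t : ℝ) : V3 := deriv K.γ t

/-- Acceleration. -/
def acc (t : ℝ) : V3 := deriv (deriv K.γ) t

/-- A regular (immersed) parameter. -/
def Regular (t : ℝ) : Prop := K.vel t ≠ 0

/-- A cusp: a singular parameter of the curve. -/
def IsCusp (t : ℝ) : Prop := K.vel t = 0

/-- The unit tangent vector (orientation of the tangent geodesic `τ_p`). -/
def unitTangent (t : ℝ) : V3 := ‖K.vel t‖⁻¹ • K.vel t

/-- The pole of the tangent geodesic `τ_p` at a regular point. -/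
def tangentPole (t : ℝ) : V3 := cross (K.γ t) (K.vel t)

/-- The pole of the tangent geodesic, defined also at (generic, semicubical) cusps. -/
def suppPole (t : ℝ) : V3 :=
  if K.Regular t then K.tangentPole t else cross (K.γ t) (K.acc t)

/-- Geodesic curvature of the spherical lift. -/
def curv (t : ℝ) : ℝ :=
  ⟪K.acc t, cross (K.γ t) (K.unitTangent t)⟫ / ‖K.vel t‖ ^ 2

/-- An inflection point: a regular point with vanishing geodesic curvature. -/
def IsInflection (t : ℝ) : Prop := K.Regular t ∧ K.curv t = 0

/-- Unit normal at `K.γ t` pointing towards the centre of curvature; this records the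
orientation of the normal geodesic `ν_p`. -/
def normalDir (t : ℝ) : V3 := posSign (K.curv t) • cross (K.γ t) (K.unitTangent t)

/-- The centre of curvature `c_p` (the lift lying at spherical distance `≤ π/2` from `p`,
so that the oriented segment of `ν_p` from `p` to `c_p` is the shorter one). -/
def center (t : ℝ) : V3 :=
  (Real.sqrt (1 + K.curv t ^ 2))⁻¹ • (|K.curv t| • K.γ t + K.normalDir t)

/-- The point `a_p` at distance `π/2` from `p` along the (oriented) tangent geodesic. -/
def antipode (t : ℝ) : V3 := K.unitTangent t

/-- The tangent geodesic `τ_p` as a subset of the sphere. -/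
def tGeo (t : ℝ) : Set V3 := {x | ‖x‖ = 1 ∧ ⟪K.tangentPole t, x⟫ = 0}

/-- The normal geodesic `ν_p` as a subset of the sphere (its pole is the velocity). -/
def nGeo (t : ℝ) : Set V3 := {x | ‖x‖ = 1 ∧ ⟪K.vel t, x⟫ = 0}


/-- A cusp of type 1: the two branches of `K` at the cusp locally lie on opposite sides
of the tangent geodesic at the cusp. -/
def IsCusp1 (t : ℝ) : Prop :=
  K.IsCusp t ∧ K.acc t ≠ 0 ∧
    ∃ δ > 0, ∀ u ∈ Ioo (t - δ) t, ∀ v ∈ Ioo t (t + δ),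
      ⟪cross (K.γ t) (K.acc t), K.γ u⟫ * ⟪cross (K.γ t) (K.acc t), K.γ v⟫ < 0

/-- Sign matching the lift of the branch at `t` with the point `K.γ s`. -/
def liftSign (s t : ℝ) : ℝ := if K.γ t = K.γ s then 1 else -1

/-- A crossing of `K`: two regular branches through one point of `ℝP²`. -/
def IsCrossing (s t : ℝ) : Prop :=
  s ≠ t ∧ K.Regular s ∧ K.Regular t ∧ projEq (K.γ s) (K.γ t)

/-- The local arc of `K` at `s` (lifted by the sign `σ`; forward iff `dir`) lies in the
region `S`. -/
def ArcIn (s : ℝ) (σ : ℝ) (dir : Bool) (S : Set V3) : Prop :=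
  ∃ δ > 0, ∀ v : ℝ, (if dir then v ∈ Ioo s (s + δ) else v ∈ Ioo (s - δ) s) → σ • K.γ v ∈ S

/-- The four local arcs of `K` near the crossing `(s,t)`: parameter, lift, direction. -/
def crossArc (s t : ℝ) : Fin 4 → ℝ × ℝ × Bool
  | 0 => (s, 1, false)
  | 1 => (s, 1, true)
  | 2 => (t, K.liftSign s t, false)
  | 3 => (t, K.liftSign s t, true)

/-- A crossing of type 1: of the two pairs of vertically opposite sectors cut out by the
two tangent geodesics, consider the pair whose angle is `< π/2`; one local arc lies in one
of the two opposite small sectors and another local arc lies in the other. -/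
def IsCrossing1 (s t : ℝ) : Prop :=
  K.IsCrossing s t ∧
    ∃ ε₁ ε₂ : ℝ, (ε₁ = 1 ∨ ε₁ = -1) ∧ (ε₂ = 1 ∨ ε₂ = -1) ∧
      ε₁ * ε₂ * ⟪K.tangentPole s, K.tangentPole t⟫ < 0 ∧
      ∃ i j : Fin 4, i ≠ j ∧
        K.ArcIn (K.crossArc s t i).1 (K.crossArc s t i).2.1 (K.crossArc s t i).2.2
          (sector (K.tangentPole s) (K.tangentPole t) ε₁ ε₂) ∧
        K.ArcIn (K.crossArc s t j).1 (K.crossArc s t j).2.1 (K.crossArc s t j).2.2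
          (sector (K.tangentPole s) (K.tangentPole t) (-ε₁) (-ε₂))

/-- A crossing of type 2: two of the local arcs lie in the same small sector. -/
def IsCrossing2 (s t : ℝ) : Prop :=
  K.IsCrossing s t ∧
    ∃ ε₁ ε₂ : ℝ, (ε₁ = 1 ∨ ε₁ = -1) ∧ (ε₂ = 1 ∨ ε₂ = -1) ∧
      ε₁ * ε₂ * ⟪K.tangentPole s, K.tangentPole t⟫ < 0 ∧
      ∃ i j : Fin 4, i ≠ j ∧
        K.ArcIn (K.crossArc s t i).1 (K.crossArc s t i).2.1 (K.crossArc s t i).2.2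
          (sector (K.tangentPole s) (K.tangentPole t) ε₁ ε₂) ∧
        K.ArcIn (K.crossArc s t j).1 (K.crossArc s t j).2.1 (K.crossArc s t j).2.2
          (sector (K.tangentPole s) (K.tangentPole t) ε₁ ε₂)

/-- The geodesic with pole `m` supports `K` at the parameter `t`: either it is tangent to
`K` at a regular point, or it passes through a cusp of `K`. -/
def Touches (t : ℝ) (m : V3) : Prop :=
  (K.Regular t ∧ Parallel m (K.tangentPole t)) ∨ (K.IsCusp t ∧ ⟪m, K.γ t⟫ = 0)

/-- The local branch of `K` at `t` (lifted by `σ`) lies, near `K.γ t`, on the side `ε` of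
the geodesic with pole `m`. -/
def SideAt (t : ℝ) (σ : ℝ) (m : V3) (ε : ℝ) : Prop :=
  ∃ δ > 0, ∀ v : ℝ, v ≠ t → |v - t| < δ → 0 < ε * ⟪m, σ • K.γ v⟫

/-- `(s,t,m)` is a double supporting geodesic of `K`: the geodesic with pole `m` is a
double tangent geodesic, a tangent geodesic through a cusp, or a geodesic through two
cusps, at the two distinct points `K.γ s`, `K.γ t`. -/
def IsDSG (s t : ℝ) (m : V3) : Prop :=
  ¬ projEq (K.γ s) (K.γ t) ∧ m ≠ 0 ∧ K.Touches s m ∧ K.Touches t m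

/-- A double supporting geodesic of type 1: the two local arcs of `K` lie on the same
side of the shorter (< π/2) of the two segments into which the two support points divide
the geodesic.  (The lifts at spherical distance `< π/2` are used.) -/
def IsDSG1 (s t : ℝ) : Prop :=
  ∃ m : V3, K.IsDSG s t m ∧
    ∃ ε : ℝ, (ε = 1 ∨ ε = -1) ∧ K.SideAt s 1 m ε ∧
      K.SideAt t (posSign ⟪K.γ s, K.γ t⟫) m ε

/-- A double supporting geodesic of type 2: the two local arcs of `K` lie on opposite
sides of the shorter segment. -/
def IsDSG2 (s t : ℝ) : Prop :=
  ∃ m : V3, K.IsDSG s t m ∧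
    ∃ ε : ℝ, (ε = 1 ∨ ε = -1) ∧ K.SideAt s 1 m ε ∧
      K.SideAt t (posSign ⟪K.γ s, K.γ t⟫) m (-ε)

/-- `(s,t)` is an antipodal pair: `q = K.γ t` is the point `a_p` at distance `π/2` along
the tangent geodesic at `p = K.γ s`. -/
def IsAntipodal (s t : ℝ) : Prop :=
  K.Regular s ∧ projEq (K.γ t) (K.antipode s)

/-- An antipodal pair of type 1: the tangent geodesic `τ_q` lies in the region `R₁`
(of the two regions into which `τ_p` and the geodesic `Y_p` dual to `c_p` divide `ℝP²`)
containing the centre of curvature `c_p`. -/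
def IsAntipodal1 (s t : ℝ) : Prop :=
  K.IsAntipodal s t ∧ K.Regular t ∧
    ∀ x : V3, ‖x‖ = 1 → ⟪K.tangentPole t, x⟫ = 0 → ¬ projEq x (K.γ t) →
      0 < ⟪K.tangentPole s, x⟫ * ⟪K.center s, x⟫ * ⟪K.tangentPole s, K.center s⟫

/-- An antipodal pair of type 2: `τ_q` lies in the other region `R₂`. -/
def IsAntipodal2 (s t : ℝ) : Prop :=
  K.IsAntipodal s t ∧ K.Regular t ∧
    ∀ x : V3, ‖x‖ = 1 → ⟪K.tangentPole t, x⟫ = 0 → ¬ projEq x (K.γ t) →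
      ⟪K.tangentPole s, x⟫ * ⟪K.center s, x⟫ * ⟪K.tangentPole s, K.center s⟫ < 0

/-- `(s,t)` is a normal-tangent pair: the tangent geodesic at `q = K.γ t` is the normal
geodesic `ν_p` at `p = K.γ s`. -/
def IsNT (s t : ℝ) : Prop :=
  K.Regular s ∧ K.Regular t ∧ Parallel (K.vel s) (K.tangentPole t)

/-- A normal-tangent pair of type 1: `q` lies on `ν_p⁻`, the segment of `ν_p` from `c_p`
to `p` (equivalently, the lift of `q` on the `normalDir` side of `p` lies beyond `c_p`). -/
def IsNT1 (s t : ℝ) : Prop :=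
  K.IsNT s t ∧
    ⟪posSign ⟪K.γ t, K.normalDir s⟫ • K.γ t, K.γ s⟫ < ⟪K.center s, K.γ s⟫

/-- A normal-tangent pair of type 2: `q` lies on `ν_p⁺`, the segment from `p` to `c_p`. -/
def IsNT2 (s t : ℝ) : Prop :=
  K.IsNT s t ∧
    ⟪K.center s, K.γ s⟫ < ⟪posSign ⟪K.γ t, K.normalDir s⟫ • K.γ t, K.γ s⟫

/-! ### The counts occurring in the formulas -/

/-- `C₁`: number of crossings of type 1. -/
def C1 : ℕ :=
  Nat.card {p : ℝ × ℝ // p.1 ∈ Dom ∧ p.2 ∈ Dom ∧ p.1 < p.2 ∧ K.IsCrossing1 p.1 p.2}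

/-- `C₂`: number of crossings of type 2. -/
def C2 : ℕ :=
  Nat.card {p : ℝ × ℝ // p.1 ∈ Dom ∧ p.2 ∈ Dom ∧ p.1 < p.2 ∧ K.IsCrossing2 p.1 p.2}

/-- `T₁`: number of double supporting geodesics of type 1. -/
def T1 : ℕ :=
  Nat.card {p : ℝ × ℝ // p.1 ∈ Dom ∧ p.2 ∈ Dom ∧ p.1 < p.2 ∧ K.IsDSG1 p.1 p.2}

/-- `T₂`: number of double supporting geodesics of type 2. -/
def T2 : ℕ :=
  Nat.card {p : ℝ × ℝ // p.1 ∈ Dom ∧ p.2 ∈ Dom ∧ p.1 < p.2 ∧ K.IsDSG2 p.1 p.2}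

/-- `I`: number of inflection points. -/
def Icnt : ℕ := Nat.card {t : ℝ // t ∈ Dom ∧ K.IsInflection t}

/-- `U`: number of cusps. -/
def U : ℕ := Nat.card {t : ℝ // t ∈ Dom ∧ K.IsCusp t}

/-- `A₁`: number of (ordered) antipodal pairs of type 1. -/
def A1 : ℕ :=
  Nat.card {p : ℝ × ℝ // p.1 ∈ Dom ∧ p.2 ∈ Dom ∧ K.IsAntipodal1 p.1 p.2}

/-- `A₂`: number of (ordered) antipodal pairs of type 2. -/
def A2 : ℕ :=
  Nat.card {p : ℝ × ℝ // p.1 ∈ Dom ∧ p.2 ∈ Dom ∧ K.IsAntipodal2 p.1 p.2}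

/-- `N₁`: number of (ordered) normal-tangent pairs of type 1. -/
def N1 : ℕ :=
  Nat.card {p : ℝ × ℝ // p.1 ∈ Dom ∧ p.2 ∈ Dom ∧ K.IsNT1 p.1 p.2}

/-- `N₂`: number of (ordered) normal-tangent pairs of type 2. -/
def N2 : ℕ :=
  Nat.card {p : ℝ × ℝ // p.1 ∈ Dom ∧ p.2 ∈ Dom ∧ K.IsNT2 p.1 p.2}

/-! ### Genericity -/

/-- The genericity conditions of the paper. -/
structure IsGeneric (K : RPCurve) : Prop where
  /-- finitely many crossings -/
  finite_cross : {p : ℝ × ℝ | p.1 ∈ Dom ∧ p.2 ∈ Dom ∧ K.IsCrossing p.1 p.2}.Finite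
  /-- finitely many double supporting geodesics -/
  finite_dsg : {p : ℝ × ℝ | p.1 ∈ Dom ∧ p.2 ∈ Dom ∧ ∃ m, K.IsDSG p.1 p.2 m}.Finite
  /-- finitely many cusps -/
  finite_cusp : {t | t ∈ Dom ∧ K.IsCusp t}.Finite
  /-- finitely many inflection points -/
  finite_infl : {t | t ∈ Dom ∧ K.IsInflection t}.Finite
  /-- finitely many antipodal pairs -/
  finite_anti : {p : ℝ × ℝ | p.1 ∈ Dom ∧ p.2 ∈ Dom ∧ K.IsAntipodal p.1 p.2}.Finite
  /-- finitely many normal-tangent pairs -/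
  finite_nt : {p : ℝ × ℝ | p.1 ∈ Dom ∧ p.2 ∈ Dom ∧ K.IsNT p.1 p.2}.Finite
  /-- tangent geodesics at self-intersections are neither parallel (equal) nor
  perpendicular -/
  cross_transverse : ∀ s t, K.IsCrossing s t →
    ¬ Parallel (K.tangentPole s) (K.tangentPole t) ∧
      ⟪K.tangentPole s, K.tangentPole t⟫ ≠ 0
  /-- the tangent geodesic through an inflection point or at a cusp is everywhere else
  transverse to `K` -/
  infl_cusp_tangent_transverse : ∀ t, (K.IsInflection t ∨ K.IsCusp t) →
    ∀ u, K.Regular u → ¬ projEq (K.γ u) (K.γ t) → ⟪K.suppPole t, K.γ u⟫ = 0 →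
      ¬ Parallel (K.suppPole t) (K.tangentPole u)
  /-- a geodesic goes through at most two tangent points or cusps of `K` -/
  at_most_two_supports : ∀ m : V3, m ≠ 0 → ∀ t₁ t₂ t₃,
    t₁ ∈ Dom → t₂ ∈ Dom → t₃ ∈ Dom →
    K.Touches t₁ m → K.Touches t₂ m → K.Touches t₃ m →
      projEq (K.γ t₁) (K.γ t₂) ∨ projEq (K.γ t₁) (K.γ t₃) ∨ projEq (K.γ t₂) (K.γ t₃)
  /-- no crossings occur at inflection points -/
  no_cross_at_infl : ∀ s t, K.IsCrossing s t → ¬ K.IsInflection s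
  /-- a geodesic normal to `K` at one point is tangent to `K` at at most one point ... -/
  normal_tangent_unique : ∀ s, K.Regular s →
    Set.Subsingleton {t | t ∈ Dom ∧ K.IsNT s t}
  /-- ... and everywhere else transverse to `K` -/
  normal_transverse : ∀ s t, K.IsNT s t → ∀ u, K.Regular u →
    ¬ projEq (K.γ u) (K.γ t) → ⟪K.vel s, K.γ u⟫ = 0 →
      ¬ Parallel (K.vel s) (K.tangentPole u)
  /-- the distance between the two points on a double-supporting geodesic is not `π/2` -/
  dsg_not_quarter : ∀ s t m, K.IsDSG s t m → ⟪K.γ s, K.γ t⟫ ≠ 0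
  /-- for an antipodal pair `(p,q)`, the tangent geodesic `τ_q` is neither `τ_p` nor the
  geodesic `Y_p` dual to `c_p` -/
  anti_nondeg : ∀ s t, K.IsAntipodal s t → K.Regular t →
    ¬ Parallel (K.tangentPole t) (K.tangentPole s) ∧
      ¬ Parallel (K.tangentPole t) (K.center s)
  /-- for a normal-tangent pair `(p,q)`, `q` is not `c_p` -/
  nt_not_center : ∀ s t, K.IsNT s t → ¬ projEq (K.γ t) (K.center s)
  /-- all self-intersections are double points -/
  at_most_double : ∀ t₁ t₂ t₃, t₁ ∈ Dom → t₂ ∈ Dom → t₃ ∈ Dom →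
    t₁ ≠ t₂ → t₁ ≠ t₃ → t₂ ≠ t₃ →
    projEq (K.γ t₁) (K.γ t₂) → ¬ projEq (K.γ t₁) (K.γ t₃)

end RPCurve

/-- `K'` is the dual curve of `K`: the point of `K'` at the parameter `t` is the point of
`ℝP²` dual to the tangent geodesic of `K` at `t` (equivalently, the point at distance
`π/2` along the normal geodesic `ν_p`). -/
def IsDualCurve (K K' : RPCurve) : Prop :=
  ∀ t, K.Regular t → ∃ c : ℝ, c ≠ 0 ∧ K'.γ t = c • K.tangentPole t

namespace RPCurve

variable (K : RPCurve)

/-! ### The function `M_p` of Theorem 1 -/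

/-- `M_p⁺`: the number of intersections of `K` with the open tangent segment `τ_p⁺`
from `p` to `a_p`. -/
def Mplus (t : ℝ) : ℕ :=
  Nat.card {s : ℝ // s ∈ Dom ∧ ∃ u ∈ Ioo 0 (π / 2),
    projEq (K.γ s) (Real.cos u • K.γ t + Real.sin u • K.unitTangent t)}

/-- `M_p⁻`: the number of intersections of `K` with the open tangent segment `τ_p⁻`
from `a_p` back to `p`. -/
def Mminus (t : ℝ) : ℕ :=
  Nat.card {s : ℝ // s ∈ Dom ∧ ∃ u ∈ Ioo (π / 2) π,
    projEq (K.γ s) (Real.cos u • K.γ t + Real.sin u • K.unitTangent t)}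

/-- `M_p = M_p⁺ - M_p⁻`. -/
def Mval (t : ℝ) : ℤ := (K.Mplus t : ℤ) - (K.Mminus t : ℤ)

/-! ### The tangent-normal frame and the function `V_p` -/

/-- The white region of the tangent-normal frame `F_p`: thinking of `τ_p` and `ν_p` as the
`x`- and `y`-axes, the region of `ℝP²` corresponding to the quadrants where `x` and `y`
have the same sign. -/
def White (t : ℝ) : Set V3 :=
  {x | 0 < ⟪K.unitTangent t, x⟫ * ⟪K.normalDir t, x⟫}

/-- The black region of the tangent-normal frame `F_p`. -/
def Black (t : ℝ) : Set V3 :=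
  {x | ⟪K.unitTangent t, x⟫ * ⟪K.normalDir t, x⟫ < 0}

/-- `W_p`: the number of geodesics through `p` tangent to `K` lying in the white region of
the tangent-normal frame at `p` (counted by their tangency parameters). -/
def Wcount (t : ℝ) : ℕ :=
  Nat.card {u : ℝ // u ∈ Dom ∧ K.Regular u ∧ ⟪K.tangentPole u, K.γ t⟫ = 0 ∧
    ∀ x : V3, ‖x‖ = 1 → ⟪K.tangentPole u, x⟫ = 0 → ¬ projEq x (K.γ t) → x ∈ K.White t}

/-- `B_p`: likewise for the black region. -/
def Bcount (t : ℝ) : ℕ :=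
  Nat.card {u : ℝ // u ∈ Dom ∧ K.Regular u ∧ ⟪K.tangentPole u, K.γ t⟫ = 0 ∧
    ∀ x : V3, ‖x‖ = 1 → ⟪K.tangentPole u, x⟫ = 0 → ¬ projEq x (K.γ t) → x ∈ K.Black t}

/-- `V_p = W_p - B_p`. -/
def Vval (t : ℝ) : ℤ := (K.Wcount t : ℤ) - (K.Bcount t : ℤ)

/-! ### The augmented curve `K̄`: `K` together with its inflection geodesics -/

/-- Sign of the derivative of the geodesic curvature at an inflection. -/
def inflSign (i : ℝ) : ℝ := posSign (deriv K.curv i)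

/-- Pole of the inflection geodesic (the tangent geodesic) at the inflection `i`. -/
def inflPole (i : ℝ) : V3 := cross (K.γ i) (K.unitTangent i)

/-- Parametrisation of the inflection geodesic at the inflection `i`. -/
def inflPt (i u : ℝ) : V3 := Real.cos u • K.γ i + Real.sin u • K.unitTangent i

/-- Forward tangent direction of the inflection geodesic. -/
def inflDir (i u : ℝ) : V3 := -Real.sin u • K.γ i + Real.cos u • K.unitTangent i

/-- The normal direction with which each point of `τ_p - p` of an inflection geodesic is
endowed (the convention of the paper): near the inflection point it points to the side
towards which `K` curves on the corresponding side of `p`, and it flips at `p` and at the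
point of `τ_p` antipodal to `p`.  The point at distance `π/2` from `inflPt i u` in this
direction is the point `p'` dual to `τ_p`, which is the centre of curvature of every
point of the inflection geodesic. -/
def inflNrm (i u : ℝ) : V3 :=
  ((if u < π / 2 then (1 : ℝ) else -1) * K.inflSign i) • K.inflPole i

end RPCurve

/-- Indexing of the points of the augmented curve `K̄`: a point of `K` (parameter `t`), or
the point of the inflection geodesic at the inflection `i` with angle-parameter `u`. -/
abbrev BarIdx := ℝ ⊕ ℝ × ℝ

/-- `barLt`: a linear-order style relation on `BarIdx` used to count unordered pairs. -/
def barLt : BarIdx → BarIdx → Prop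
  | Sum.inl s, Sum.inl t => s < t
  | Sum.inl _, Sum.inr _ => True
  | Sum.inr _, Sum.inl _ => False
  | Sum.inr p, Sum.inr q => p.1 < q.1 ∨ (p.1 = q.1 ∧ p.2 < q.2)

namespace RPCurve

variable (K : RPCurve)

/-- The domain of `K̄`: parameters of `K`, together with one copy of `(0, π)` for each
inflection point of `K` (the inflection geodesic minus the inflection point, traversed
once in `ℝP²`). -/
def barDom : Set BarIdx :=
  (Sum.inl '' Dom) ∪
    (Sum.inr '' {p : ℝ × ℝ | p.1 ∈ Dom ∧ K.IsInflection p.1 ∧ p.2 ∈ Ioo 0 π})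

/-- The point of `K̄` at a bar-index. -/
def barPt : BarIdx → V3
  | Sum.inl t => K.γ t
  | Sum.inr (i, u) => K.inflPt i u

/-- The pole of the tangent geodesic of `K̄` at a bar-index (for a point of an inflection
geodesic, the tangent geodesic is the geodesic itself). -/
def barPole : BarIdx → V3
  | Sum.inl t => K.tangentPole t
  | Sum.inr (i, _) => K.inflPole i

/-- Regularity at a bar-index. -/
def barRegular : BarIdx → Prop
  | Sum.inl t => K.Regular t
  | Sum.inr _ => True

/-- The pole of the normal geodesic `ν_α` of `K̄` at a bar-index (for a point `α` of an
inflection geodesic `τ_p`, `ν_α` is the geodesic through `α` and the dual point `p'`). -/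
def barNuPole : BarIdx → V3
  | Sum.inl t => K.vel t
  | Sum.inr (i, u) => cross (K.inflPt i u) (K.inflNrm i u)

/-- The unit normal direction (towards the centre of curvature) at a bar-index. -/
def barE : BarIdx → V3
  | Sum.inl t => K.normalDir t
  | Sum.inr (i, u) => K.inflNrm i u

/-- Cosine of the distance from the point to its centre of curvature (for a point of an
inflection geodesic the centre of curvature is at distance exactly `π/2`). -/
def barCos : BarIdx → ℝ
  | Sum.inl t => ⟪K.center t, K.γ t⟫
  | Sum.inr _ => 0

/-- A crossing of the augmented curve `K̄` (inflection points of `K` are *not* counted as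
crossings: the parameter `u = 0` is excluded from the domain of inflection geodesics). -/
def IsBarCrossing (a b : BarIdx) : Prop :=
  a ≠ b ∧ K.barRegular a ∧ K.barRegular b ∧ projEq (K.barPt a) (K.barPt b)

/-- Lift sign matching the branch at `b` with the point `K.barPt a`. -/
def barLift (a b : BarIdx) : ℝ := if K.barPt b = K.barPt a then 1 else -1

/-- The local arc of `K̄` at `a` (lift `σ`, forward iff `dir`) lies in the sector with
sign `ε₁` for the pole `mself` of the branch through `a` and sign `ε₂` for the pole
`mother` of the other branch.  For an arc of an inflection geodesic, the geodesic is
construed as bending slightly towards its normal direction. -/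
def barArcIn (a : BarIdx) (σ : ℝ) (dir : Bool) (mself mother : V3) (ε₁ ε₂ : ℝ) : Prop :=
  match a with
  | Sum.inl s => K.ArcIn s σ dir (sector mself mother ε₁ ε₂)
  | Sum.inr (i, u) =>
      0 < ε₁ * ⟪mself, σ • K.inflNrm i u⟫ ∧
      0 < ε₂ * ⟪mother, ((if dir then (1 : ℝ) else -1) * σ) • K.inflDir i u⟫

/-- The four local arcs of `K̄` at a crossing `(a, b)`, as sector-membership predicates. -/
def barCrossArcIn (a b : BarIdx) (k : Fin 4) (η₁ η₂ : ℝ) : Prop :=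
  if k = 0 then K.barArcIn a 1 false (K.barPole a) (K.barPole b) η₁ η₂
  else if k = 1 then K.barArcIn a 1 true (K.barPole a) (K.barPole b) η₁ η₂
  else if k = 2 then K.barArcIn b (K.barLift a b) false (K.barPole b) (K.barPole a) η₂ η₁
  else K.barArcIn b (K.barLift a b) true (K.barPole b) (K.barPole a) η₂ η₁

/-- A crossing of `K̄` of type 1. -/
def IsBarCrossing1 (a b : BarIdx) : Prop :=
  K.IsBarCrossing a b ∧
    ∃ ε₁ ε₂ : ℝ, (ε₁ = 1 ∨ ε₁ = -1) ∧ (ε₂ = 1 ∨ ε₂ = -1) ∧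
      ε₁ * ε₂ * ⟪K.barPole a, K.barPole b⟫ < 0 ∧
      ∃ i j : Fin 4, i ≠ j ∧
        K.barCrossArcIn a b i ε₁ ε₂ ∧ K.barCrossArcIn a b j (-ε₁) (-ε₂)

/-- A crossing of `K̄` of type 2. -/
def IsBarCrossing2 (a b : BarIdx) : Prop :=
  K.IsBarCrossing a b ∧
    ∃ ε₁ ε₂ : ℝ, (ε₁ = 1 ∨ ε₁ = -1) ∧ (ε₂ = 1 ∨ ε₂ = -1) ∧
      ε₁ * ε₂ * ⟪K.barPole a, K.barPole b⟫ < 0 ∧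
      ∃ i j : Fin 4, i ≠ j ∧
        K.barCrossArcIn a b i ε₁ ε₂ ∧ K.barCrossArcIn a b j ε₁ ε₂

/-- A normal-tangent pair of `K̄`. -/
def IsBarNT (a b : BarIdx) : Prop :=
  K.barRegular a ∧ K.barRegular b ∧ Parallel (K.barNuPole a) (K.barPole b)

/-- A normal-tangent pair of `K̄` of type 1 (`q` on `ν_α⁻`). -/
def IsBarNT1 (a b : BarIdx) : Prop :=
  K.IsBarNT a b ∧
    ⟪posSign ⟪K.barPt b, K.barE a⟫ • K.barPt b, K.barPt a⟫ < K.barCos a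

/-- A normal-tangent pair of `K̄` of type 2 (`q` on `ν_α⁺`). -/
def IsBarNT2 (a b : BarIdx) : Prop :=
  K.IsBarNT a b ∧
    K.barCos a < ⟪posSign ⟪K.barPt b, K.barE a⟫ • K.barPt b, K.barPt a⟫

/-- `C₁` for the augmented curve `K̄`. -/
def C1bar : ℕ :=
  Nat.card {p : BarIdx × BarIdx //
    p.1 ∈ K.barDom ∧ p.2 ∈ K.barDom ∧ barLt p.1 p.2 ∧ K.IsBarCrossing1 p.1 p.2}

/-- `C₂` for the augmented curve `K̄`. -/
def C2bar : ℕ :=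
  Nat.card {p : BarIdx × BarIdx //
    p.1 ∈ K.barDom ∧ p.2 ∈ K.barDom ∧ barLt p.1 p.2 ∧ K.IsBarCrossing2 p.1 p.2}

/-- `N₁` for the augmented curve `K̄` (ordered pairs). -/
def N1bar : ℕ :=
  Nat.card {p : BarIdx × BarIdx //
    p.1 ∈ K.barDom ∧ p.2 ∈ K.barDom ∧ K.IsBarNT1 p.1 p.2}

/-- `N₂` for the augmented curve `K̄` (ordered pairs). -/
def N2bar : ℕ :=
  Nat.card {p : BarIdx × BarIdx //
    p.1 ∈ K.barDom ∧ p.2 ∈ K.barDom ∧ K.IsBarNT2 p.1 p.2}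

end RPCurve

/-!
Near a cusp `t` of `K` (velocity `0`, acceleration `A ≠ 0`) the velocity is
`(u - t) • A + o(u - t)`, so the unit tangent `T` tends to `A / ‖A‖` after the cusp and to
`-A / ‖A‖` before it. The normal `posSign κ • (γ × T)` then reverses too, provided the geodesic
curvature `κ` has the same sign on both sides; as inflections are finite in number, `κ` has a
constant sign on each side.

Let `m = γ(t) × A` be the pole of the tangent geodesic at the cusp. Just after the cusp the branch
lies on the side of that geodesic towards which it curves, i.e. `κ ⟪m, γ⟫ > 0`. Indeed
`⟪m, T⟫' = κ ⟪m, γ × γ'⟫ - ‖γ'‖ ⟪m, γ⟫` and `⟪m, γ × γ'⟫ > 0` there; if `κ > 0 > ⟪m, γ⟫`, then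
`⟪m, T⟫` increases from its limit `0`, so `⟪m, γ⟫' = ‖γ'‖ ⟪m, T⟫ > 0` and `⟪m, γ⟫` is positive
after all. Running the curve backwards gives `κ ⟪m, γ⟫ < 0` just before the cusp. At a type 1 cusp
`⟪m, γ⟫` changes sign, hence `κ` does not.
-/

lemma cross_coord (x y : V3) (i : Fin 3) :
    cross x y i = ![x 1 * y 2 - x 2 * y 1, x 2 * y 0 - x 0 * y 2, x 0 * y 1 - x 1 * y 0] i := by
  simp [cross]

lemma cross_zero_right (x : V3) : cross x 0 = 0 := by
  ext i; fin_cases i <;> simp [cross_coord]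

lemma cross_smul_right (c : ℝ) (x y : V3) : cross x (c • y) = c • cross x y := by
  ext i; fin_cases i <;> simp [cross_coord] <;> ring

lemma cross_neg_right (x y : V3) : cross x (-y) = -cross x y := by
  ext i; fin_cases i <;> simp [cross_coord] <;> ring

lemma cross_neg_neg (x y : V3) : cross (-x) (-y) = cross x y := by
  ext i; fin_cases i <;> simp [cross_coord]

lemma inner_cross_left_self (x y : V3) : ⟪cross x y, x⟫ = 0 := by
  simp [PiLp.inner_apply, Fin.sum_univ_three, cross_coord]; ring

lemma inner_cross_right_self (x y : V3) : ⟪cross x y, y⟫ = 0 := by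
  simp [PiLp.inner_apply, Fin.sum_univ_three, cross_coord]; ring

lemma inner_cross_self (x y : V3) :
    ⟪cross x y, cross x y⟫ = ⟪x, x⟫ * ⟪y, y⟫ - ⟪x, y⟫ ^ 2 := by
  simp [PiLp.inner_apply, Fin.sum_univ_three, cross_coord, -inner_self_eq_norm_sq_to_K]; ring

lemma inner_mul_cross_frame (m x y z : V3) :
    ⟪m, z⟫ * (⟪x, x⟫ * ⟪y, y⟫ - ⟪x, y⟫ ^ 2) =
      ⟪m, x⟫ * (⟪x, z⟫ * ⟪y, y⟫ - ⟪y, z⟫ * ⟪x, y⟫) +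
      ⟪m, y⟫ * (⟪y, z⟫ * ⟪x, x⟫ - ⟪x, z⟫ * ⟪x, y⟫) +
      ⟪m, cross x y⟫ * ⟪z, cross x y⟫ := by
  simp [PiLp.inner_apply, Fin.sum_univ_three, cross_coord, -inner_self_eq_norm_sq_to_K]; ring

def crossBilin : V3 →L[ℝ] V3 →L[ℝ] V3 :=
  LinearMap.toContinuousLinearMap <| LinearMap.toContinuousLinearMap.toLinearMap ∘ₗ
    LinearMap.mk₂ ℝ cross
    (fun x y z => by ext i; fin_cases i <;> simp [cross_coord] <;> ring)
    (fun c x y => by ext i; fin_cases i <;> simp [cross_coord] <;> ring)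
    (fun x y z => by ext i; fin_cases i <;> simp [cross_coord] <;> ring)
    (fun c x y => cross_smul_right c x y)

@[simp]
lemma crossBilin_apply (x y : V3) : crossBilin x y = cross x y := by
  simp [crossBilin]

lemma HasDerivAt.cross {f g : ℝ → V3} {f' g' : V3} {u : ℝ} (hf : HasDerivAt f f' u)
    (hg : HasDerivAt g g' u) :
    HasDerivAt (fun x => cross (f x) (g x)) (cross (f u) g' + cross f' (g u)) u := by
  simpa using crossBilin.hasDerivAt_of_bilinear (fun _ => hf) (fun _ => hg)

lemma Filter.Tendsto.cross {α : Type*} {l : Filter α} {f g : α → V3} {x y : V3}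
    (hf : Tendsto f l (𝓝 x)) (hg : Tendsto g l (𝓝 y)) :
    Tendsto (fun a => cross (f a) (g a)) l (𝓝 (cross x y)) := by
  have h := crossBilin.continuous₂.continuousAt.tendsto.comp (hf.prodMk_nhds hg)
  simpa [Function.comp_def] using h

lemma Continuous.cross {α : Type*} [TopologicalSpace α] {f g : α → V3} (hf : Continuous f)
    (hg : Continuous g) : Continuous fun a => cross (f a) (g a) :=
  continuous_iff_continuousAt.mpr fun a => (hf.tendsto a).cross (hg.tendsto a)

section

variable {E : Type*} [NormedAddCommGroup E] [NormedSpace ℝ E] {f : ℝ → E} {c : ℝ}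

lemma Function.Periodic.deriv (h : Function.Periodic f c) : Function.Periodic (deriv f) c :=
  fun x => by rw [← deriv_comp_add_const, h.funext]

lemma Function.Antiperiodic.deriv (h : Function.Antiperiodic f c) :
    Function.Antiperiodic (deriv f) c :=
  fun x => by rw [← deriv_comp_add_const, h.funext, deriv.neg]

end

lemma HasDerivAt.eventually_pos_nhdsGT {f : ℝ → ℝ} {f' a : ℝ} (hf : HasDerivAt f f' a)
    (hfa : f a = 0) (hf' : 0 < f') : ∀ᶠ x in 𝓝[>] a, 0 < f x := by
  filter_upwards [((hasDerivAt_iff_tendsto_slope.mp hf).mono_left (nhdsGT_le_nhdsNE a)).eventually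
    (eventually_gt_nhds hf'), self_mem_nhdsWithin] with x hx hax
  exact pos_of_slope_pos hax hx hfa

lemma eventually_pos_or_eventually_neg_nhdsGT {f : ℝ → ℝ} {a : ℝ}
    (hf : ∀ᶠ u in 𝓝[>] a, ContinuousAt f u) (hf₀ : ∀ᶠ u in 𝓝[>] a, f u ≠ 0) :
    (∀ᶠ u in 𝓝[>] a, 0 < f u) ∨ (∀ᶠ u in 𝓝[>] a, f u < 0) := by
  obtain ⟨b, hab, hb⟩ := (nhdsGT_basis a).eventually_iff.mp (hf.and hf₀)
  have hIoo : Ioo a b ∈ 𝓝[>] a := Ioo_mem_nhdsGT hab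
  have hcont : ContinuousOn f (Ioo a b) := fun u hu => (hb hu).1.continuousWithinAt
  have hsame : ∀ u ∈ Ioo a b, ∀ v ∈ Ioo a b, f u < 0 → f v < 0 := by
    intro u hu v hv hu₀
    by_contra! hv₀
    obtain ⟨w, hw, hw₀⟩ := isPreconnected_Ioo.intermediate_value hu hv hcont ⟨hu₀.le, hv₀⟩
    exact (hb hw).2 hw₀
  obtain ⟨x, hx⟩ := nonempty_Ioo.mpr hab
  rcases (hb hx).2.lt_or_gt with hx₀ | hx₀
  · exact Or.inr (by filter_upwards [hIoo] with v hv using hsame x hx v hv hx₀)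
  · refine Or.inl ?_
    filter_upwards [hIoo] with v hv
    by_contra! hv₀
    exact lt_asymm hx₀ (hsame v hv x hx (hv₀.lt_of_ne (hb hv).2))

lemma StrictMonoOn.pos_of_tendsto_nhdsGT {f : ℝ → ℝ} {a b : ℝ} (hf : StrictMonoOn f (Ioo a b))
    (hlim : Tendsto f (𝓝[>] a) (𝓝 0)) {x : ℝ} (hx : x ∈ Ioo a b) : 0 < f x := by
  obtain ⟨y, hay, hyx⟩ := exists_between hx.1
  have hy : y ∈ Ioo a b := ⟨hay, hyx.trans hx.2⟩
  have h₀ : 0 ≤ f y := by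
    refine le_of_tendsto hlim ?_
    filter_upwards [Ioo_mem_nhdsGT hay] with z hz
    exact (hf ⟨hz.1, hz.2.trans hy.2⟩ hy hz.2).le
  exact h₀.trans_lt (hf hy hx hyx)

lemma mul_pos_of_mul_mul_mul_pos {a b c : ℝ} (h : 0 < a * b * (a * c)) : 0 < b * c :=
  pos_of_mul_pos_right (a := a ^ 2) (by linarith [h]) (sq_nonneg a)

lemma posSign_eq_of_mul_pos {a b : ℝ} (h : 0 < a * b) : posSign a = posSign b := by
  rcases mul_pos_iff.mp h with ⟨ha, hb⟩ | ⟨ha, hb⟩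
  · simp [posSign, ha.le, hb.le]
  · simp [posSign, not_le.mpr ha, not_le.mpr hb]

namespace RPCurve

variable (K : RPCurve) {t : ℝ}

lemma hasDerivAt_γ (u : ℝ) : HasDerivAt K.γ (K.vel u) u :=
  (K.smooth.differentiable (by simp) u).hasDerivAt

lemma contDiff_vel : ContDiff ℝ (⊤ : ℕ∞) K.vel :=
  (contDiff_infty_iff_deriv.mp K.smooth).2

lemma hasDerivAt_vel (u : ℝ) : HasDerivAt K.vel (K.acc u) u :=
  (K.contDiff_vel.differentiable (by simp) u).hasDerivAt

lemma continuous_acc : Continuous K.acc :=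
  (contDiff_infty_iff_deriv.mp K.contDiff_vel).2.continuous

lemma inner_γ_self (u : ℝ) : ⟪K.γ u, K.γ u⟫ = 1 := by
  rw [real_inner_self_eq_norm_sq, K.unit u, one_pow]

lemma inner_γ_vel (u : ℝ) : ⟪K.γ u, K.vel u⟫ = 0 := by
  have h := ((K.hasDerivAt_γ u).inner ℝ (K.hasDerivAt_γ u)).unique
    ((hasDerivAt_const u (1 : ℝ)).congr_of_eventuallyEq
      (Eventually.of_forall fun x => K.inner_γ_self x))
  rw [real_inner_comm (K.γ u) (K.vel u)] at h
  linarith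

lemma inner_γ_acc (u : ℝ) : ⟪K.γ u, K.acc u⟫ = -‖K.vel u‖ ^ 2 := by
  have h := ((K.hasDerivAt_γ u).inner ℝ (K.hasDerivAt_vel u)).unique
    ((hasDerivAt_const u (0 : ℝ)).congr_of_eventuallyEq
      (Eventually.of_forall fun x => K.inner_γ_vel x))
  rw [real_inner_self_eq_norm_sq] at h
  linarith

lemma curv_eq (u : ℝ) : K.curv u = ⟪K.acc u, cross (K.γ u) (K.vel u)⟫ / ‖K.vel u‖ ^ 3 := by
  rw [curv, unitTangent, cross_smul_right, real_inner_smul_right, inv_mul_eq_div, div_div,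
    ← pow_succ']

-- At a singular point `curv` is `0`, by the convention `x / 0 = 0`.
lemma regular_of_curv_ne_zero {u : ℝ} (h : K.curv u ≠ 0) : K.Regular u := by
  intro hv
  simp [K.curv_eq, hv] at h

lemma continuousAt_curv {u : ℝ} (hu : K.Regular u) : ContinuousAt K.curv u := by
  have hnum : Continuous fun x => ⟪K.acc x, cross (K.γ x) (K.vel x)⟫ :=
    K.continuous_acc.inner (K.smooth.continuous.cross K.contDiff_vel.continuous)
  rw [show K.curv = _ from funext K.curv_eq]
  exact hnum.continuousAt.div (K.contDiff_vel.continuous.norm.pow 3).continuousAt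
    (pow_ne_zero 3 (norm_ne_zero_iff.mpr hu))

lemma periodic_isInflection : Function.Periodic K.IsInflection 1 := by
  intro u
  rcases K.closed with h | h
  · have hv : Function.Periodic K.vel 1 := Function.Periodic.deriv h
    have ha : Function.Periodic K.acc 1 := hv.deriv
    simp only [IsInflection, Regular, curv, unitTangent, h u, hv u, ha u]
  · have hv : Function.Antiperiodic K.vel 1 := Function.Antiperiodic.deriv h
    have ha : Function.Antiperiodic K.acc 1 := hv.deriv
    simp only [IsInflection, Regular, curv, unitTangent, h u, hv u, ha u, norm_neg, smul_neg,
      cross_neg_neg, inner_neg_left, neg_div, neg_eq_zero, ne_eq]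

lemma eventually_not_isInflection (hfin : {t | t ∈ Dom ∧ K.IsInflection t}.Finite)
    (ht : ¬ K.IsInflection t) : ∀ᶠ u in 𝓝 t, ¬ K.IsInflection u := by
  set F := {u | u ∈ Ioo (t - 1) (t + 1) ∧ K.IsInflection u}
  have hF : F.Finite := by
    refine ((hfin.prod (Set.finite_Icc (⌊t⌋ - 1) (⌊t⌋ + 1))).image
      fun p : ℝ × ℤ => p.1 + p.2).subset ?_
    rintro u ⟨hu, hinf⟩
    refine ⟨(Int.fract u, ⌊u⌋), ⟨⟨⟨Int.fract_nonneg u, Int.fract_lt_one u⟩, ?_⟩, ?_, ?_⟩,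
      Int.fract_add_floor u⟩
    · rwa [Int.fract, ← mul_one (⌊u⌋ : ℝ), K.periodic_isInflection.sub_int_mul_eq]
    · simpa [Int.floor_sub_one] using Int.floor_mono hu.1.le
    · simpa [Int.floor_add_one] using Int.floor_mono hu.2.le
  filter_upwards [Ioo_mem_nhds (sub_one_lt t) (lt_add_one t),
    hF.isClosed.isOpen_compl.mem_nhds fun h => ht h.2] with u hu hF' hinf
  exact hF' ⟨hu, hinf⟩

lemma tendsto_slope_vel (hcusp : K.IsCusp t) :
    Tendsto (fun u => (u - t)⁻¹ • K.vel u) (𝓝[≠] t) (𝓝 (K.acc t)) := by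
  refine (hasDerivAt_iff_tendsto_slope.mp (K.hasDerivAt_vel t)).congr fun u => ?_
  rw [slope_def_module, hcusp, sub_zero]

lemma eventually_regular_of_isCusp (hcusp : K.IsCusp t) (hacc : K.acc t ≠ 0) :
    ∀ᶠ u in 𝓝[≠] t, K.Regular u := by
  filter_upwards [(K.tendsto_slope_vel hcusp).eventually_ne hacc] with u hu hv
  simp [hv] at hu

lemma eventually_curv_ne_zero (hfin : {t | t ∈ Dom ∧ K.IsInflection t}.Finite)
    (hcusp : K.IsCusp t) (hacc : K.acc t ≠ 0) : ∀ᶠ u in 𝓝[≠] t, K.curv u ≠ 0 := by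
  filter_upwards [K.eventually_regular_of_isCusp hcusp hacc,
    nhdsWithin_le_nhds (K.eventually_not_isInflection hfin fun h => h.1 hcusp)] with u hreg hinf
  exact fun h => hinf ⟨hreg, h⟩

lemma tendsto_unitTangent_nhdsGT (hcusp : K.IsCusp t) (hacc : K.acc t ≠ 0) :
    Tendsto K.unitTangent (𝓝[>] t) (𝓝 (NormedSpace.normalize (K.acc t))) := by
  have hN : ContinuousAt NormedSpace.normalize (K.acc t) :=
    (continuousAt_id.norm.inv₀ (norm_ne_zero_iff.mpr hacc)).smul continuousAt_id
  refine (hN.tendsto.comp ((K.tendsto_slope_vel hcusp).mono_left (nhdsGT_le_nhdsNE t))).congr' ?_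
  filter_upwards [self_mem_nhdsWithin] with u (hu : t < u)
  exact NormedSpace.normalize_smul_of_pos (inv_pos.mpr (sub_pos.mpr hu)) _

def reverse : RPCurve where
  γ u := K.γ (-u)
  smooth := K.smooth.comp contDiff_neg
  unit u := K.unit (-u)
  closed := K.closed.imp
    (fun h u => by
      show K.γ (-(u + 1)) = K.γ (-u)
      rw [← h (-(u + 1))]; ring_nf)
    (fun h u => by
      show K.γ (-(u + 1)) = -K.γ (-u)
      rw [show -u = -(u + 1) + 1 by ring, h, neg_neg])

@[simp]
lemma reverse_γ (u : ℝ) : K.reverse.γ u = K.γ (-u) := rfl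

@[simp]
lemma reverse_vel (u : ℝ) : K.reverse.vel u = -K.vel (-u) :=
  deriv_comp_neg K.γ u

@[simp]
lemma reverse_acc (u : ℝ) : K.reverse.acc u = K.acc (-u) := by
  rw [acc, show deriv K.reverse.γ = fun x => -K.vel (-x) from funext K.reverse_vel,
    deriv.fun_neg, deriv_comp_neg, neg_neg]
  rfl

@[simp]
lemma reverse_unitTangent (u : ℝ) : K.reverse.unitTangent u = -K.unitTangent (-u) := by
  simp [unitTangent]

@[simp]
lemma reverse_curv (u : ℝ) : K.reverse.curv u = -K.curv (-u) := by
  simp [curv, cross_neg_right, neg_div]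

lemma tendsto_unitTangent_nhdsLT (hcusp : K.IsCusp t) (hacc : K.acc t ≠ 0) :
    Tendsto K.unitTangent (𝓝[<] t) (𝓝 (-NormedSpace.normalize (K.acc t))) := by
  have h := K.reverse.tendsto_unitTangent_nhdsGT (t := -t) (by simpa [IsCusp] using hcusp)
    (by simpa using hacc)
  have h' := h.comp (tendsto_neg_nhdsLT_neg (a := -t))
  rw [neg_neg] at h'
  simpa [Function.comp_def] using h'.neg

lemma inner_unitTangent (m : V3) (u : ℝ) :
    ⟪m, K.unitTangent u⟫ = ⟪m, K.vel u⟫ / ‖K.vel u‖ := by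
  rw [unitTangent, real_inner_smul_right, inv_mul_eq_div]

lemma inner_acc_mul_norm_vel_sq (m : V3) (u : ℝ) :
    ⟪m, K.acc u⟫ * ‖K.vel u‖ ^ 2 = ⟪m, K.vel u⟫ * ⟪K.vel u, K.acc u⟫ +
      ⟪m, cross (K.γ u) (K.vel u)⟫ * ⟪K.acc u, cross (K.γ u) (K.vel u)⟫ -
      ‖K.vel u‖ ^ 4 * ⟪m, K.γ u⟫ := by
  have h := inner_mul_cross_frame m (K.γ u) (K.vel u) (K.acc u)
  rw [K.inner_γ_self, K.inner_γ_vel, K.inner_γ_acc, real_inner_self_eq_norm_sq] at h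
  linear_combination h

lemma hasDerivAt_norm_vel {u : ℝ} (hu : K.Regular u) :
    HasDerivAt (fun x => ‖K.vel x‖) (⟪K.vel u, K.acc u⟫ / ‖K.vel u‖) u := by
  have h := (K.hasDerivAt_vel u).norm_sq.sqrt (pow_ne_zero 2 (norm_ne_zero_iff.mpr hu))
  simp only [Real.sqrt_sq (norm_nonneg _)] at h
  convert h using 1
  field_simp

lemma hasDerivAt_inner_unitTangent (m : V3) {u : ℝ} (hu : K.Regular u) :
    HasDerivAt (fun x => ⟪m, K.unitTangent x⟫)
      (K.curv u * ⟪m, cross (K.γ u) (K.vel u)⟫ - ‖K.vel u‖ * ⟪m, K.γ u⟫) u := by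
  have hnum := (hasDerivAt_const u m).inner ℝ (K.hasDerivAt_vel u)
  rw [inner_zero_left, add_zero] at hnum
  have hv : ‖K.vel u‖ ≠ 0 := norm_ne_zero_iff.mpr hu
  refine ((hnum.div (K.hasDerivAt_norm_vel hu) hv).congr_of_eventuallyEq
    (Eventually.of_forall (K.inner_unitTangent m))).congr_deriv ?_
  rw [K.curv_eq]
  field_simp
  linear_combination K.inner_acc_mul_norm_vel_sq m u

lemma eventually_inner_cross_pos (hcusp : K.IsCusp t) (hacc : K.acc t ≠ 0) :
    ∀ᶠ u in 𝓝[>] t, 0 < ⟪cross (K.γ t) (K.acc t), cross (K.γ u) (K.vel u)⟫ := by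
  set m := cross (K.γ t) (K.acc t)
  have hv : K.vel t = 0 := hcusp
  have hd := (hasDerivAt_const t m).inner ℝ ((K.hasDerivAt_γ t).cross (K.hasDerivAt_vel t))
  simp only [hv, cross_zero_right, add_zero, inner_zero_left] at hd
  refine hd.eventually_pos_nhdsGT (by simp [hv, cross_zero_right]) ?_
  rw [inner_cross_self, K.inner_γ_self, K.inner_γ_acc, hv, real_inner_self_eq_norm_sq]
  simpa using pow_pos (norm_pos_iff.mpr hacc) 2

lemma tendsto_inner_unitTangent_nhdsGT (hcusp : K.IsCusp t) (hacc : K.acc t ≠ 0) :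
    Tendsto (fun u => ⟪cross (K.γ t) (K.acc t), K.unitTangent u⟫) (𝓝[>] t) (𝓝 0) := by
  have h := (tendsto_const_nhds (x := cross (K.γ t) (K.acc t))).inner (𝕜 := ℝ)
    (K.tendsto_unitTangent_nhdsGT hcusp hacc)
  rwa [NormedSpace.normalize, real_inner_smul_right, inner_cross_right_self, mul_zero] at h

lemma not_eventually_curv_pos_side_neg (hcusp : K.IsCusp t) (hacc : K.acc t ≠ 0) {c : ℝ}
    (hcurv : ∀ᶠ u in 𝓝[>] t, 0 < c * K.curv u)
    (hside : ∀ᶠ u in 𝓝[>] t, c * ⟪cross (K.γ t) (K.acc t), K.γ u⟫ < 0) : False := by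
  set m := cross (K.γ t) (K.acc t)
  obtain ⟨b, htb, hb⟩ := (nhdsGT_basis t).eventually_iff.mp
    ((hcurv.and hside).and (K.eventually_inner_cross_pos hcusp hacc))
  have hreg : ∀ u ∈ Ioo t b, K.Regular u := fun u hu =>
    K.regular_of_curv_ne_zero (right_ne_zero_of_mul (hb hu).1.1.ne')
  have hG := fun u (hu : u ∈ Ioo t b) => (K.hasDerivAt_inner_unitTangent m (hreg u hu)).const_mul c
  have hGmono : StrictMonoOn (fun u => c * ⟪m, K.unitTangent u⟫) (Ioo t b) := by
    refine strictMonoOn_of_deriv_pos (convex_Ioo t b)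
      (fun u hu => (hG u hu).continuousAt.continuousWithinAt) fun u hu => ?_
    rw [interior_Ioo] at hu
    obtain ⟨⟨hk, hH⟩, hP⟩ := hb hu
    rw [(hG u hu).deriv]
    nlinarith [mul_pos hk hP, mul_pos (norm_pos_iff.mpr (hreg u hu)) (neg_pos.mpr hH)]
  have hlim : Tendsto (fun u => c * ⟪m, K.unitTangent u⟫) (𝓝[>] t) (𝓝 0) := by
    simpa using (K.tendsto_inner_unitTangent_nhdsGT hcusp hacc).const_mul c
  obtain ⟨u, hu⟩ := nonempty_Ioo.mpr htb
  have hH : StrictMonoOn (fun x => c * ⟪m, K.γ x⟫) (Icc t u) := by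
    have hd := fun x => ((hasDerivAt_const x m).inner ℝ (K.hasDerivAt_γ x)).const_mul c
    refine strictMonoOn_of_deriv_pos (convex_Icc t u)
      (fun x _ => (hd x).continuousAt.continuousWithinAt) fun x hx => ?_
    rw [interior_Icc] at hx
    have hx' : x ∈ Ioo t b := ⟨hx.1, hx.2.trans hu.2⟩
    have hGx : 0 < c * ⟪m, K.vel x⟫ / ‖K.vel x‖ := by
      simpa only [K.inner_unitTangent, mul_div_assoc] using hGmono.pos_of_tendsto_nhdsGT hlim hx'
    rw [(hd x).deriv, inner_zero_left, add_zero]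
    exact (div_pos_iff_of_pos_right (norm_pos_iff.mpr (hreg x hx'))).mp hGx
  have h := hH (left_mem_Icc.mpr hu.1.le) (right_mem_Icc.mpr hu.1.le) hu.1
  simp only [m, inner_cross_left_self, mul_zero] at h
  exact (hb hu).1.2.not_gt h

lemma eventually_side_mul_curv_pos_nhdsGT (hcusp : K.IsCusp t) (hacc : K.acc t ≠ 0)
    (hcurv : ∀ᶠ u in 𝓝[>] t, K.curv u ≠ 0)
    (hside : ∀ᶠ u in 𝓝[>] t, ⟪cross (K.γ t) (K.acc t), K.γ u⟫ ≠ 0) :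
    ∀ᶠ u in 𝓝[>] t, 0 < ⟪cross (K.γ t) (K.acc t), K.γ u⟫ * K.curv u := by
  have hcurv_cont : ∀ᶠ u in 𝓝[>] t, ContinuousAt K.curv u :=
    hcurv.mono fun u hu => K.continuousAt_curv (K.regular_of_curv_ne_zero hu)
  have hside_cont : ∀ᶠ u in 𝓝[>] t, ContinuousAt (fun u => ⟪cross (K.γ t) (K.acc t), K.γ u⟫) u :=
    Eventually.of_forall fun u => (continuous_const.inner K.smooth.continuous).continuousAt
  rcases eventually_pos_or_eventually_neg_nhdsGT hcurv_cont hcurv with hk | hk <;>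
    rcases eventually_pos_or_eventually_neg_nhdsGT hside_cont hside with hH | hH
  · filter_upwards [hH, hk] with u using mul_pos
  · exact (K.not_eventually_curv_pos_side_neg hcusp hacc (c := 1) (by simpa using hk)
      (by simpa using hH)).elim
  · exact (K.not_eventually_curv_pos_side_neg hcusp hacc (c := -1) (by simpa using hk)
      (by simpa using hH)).elim
  · filter_upwards [hH, hk] with u using mul_pos_of_neg_of_neg

lemma eventually_side_mul_curv_neg_nhdsLT (hcusp : K.IsCusp t) (hacc : K.acc t ≠ 0)
    (hcurv : ∀ᶠ u in 𝓝[<] t, K.curv u ≠ 0)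
    (hside : ∀ᶠ u in 𝓝[<] t, ⟪cross (K.γ t) (K.acc t), K.γ u⟫ ≠ 0) :
    ∀ᶠ u in 𝓝[<] t, ⟪cross (K.γ t) (K.acc t), K.γ u⟫ * K.curv u < 0 := by
  have h := K.reverse.eventually_side_mul_curv_pos_nhdsGT (t := -t)
    (by simpa [IsCusp] using hcusp) (by simpa using hacc)
    (by simpa using tendsto_neg_nhdsGT_neg.eventually hcurv)
    (by simpa using tendsto_neg_nhdsGT_neg.eventually hside)
  have h' := (tendsto_neg_nhdsLT_neg (a := -t)).eventually h
  rw [neg_neg] at h'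
  simpa using h'

lemma exists_eventually_posSign_curv_eq (hfin : {t | t ∈ Dom ∧ K.IsInflection t}.Finite)
    (ht : K.IsCusp1 t) : ∃ σ : ℝ, ∀ᶠ u in 𝓝[≠] t, posSign (K.curv u) = σ := by
  obtain ⟨hcusp, hacc, δ, hδ, hopp⟩ := ht
  set H := fun u => ⟪cross (K.γ t) (K.acc t), K.γ u⟫
  have hL : Ioo (t - δ) t ∈ 𝓝[<] t := Ioo_mem_nhdsLT (by linarith)
  have hR : Ioo t (t + δ) ∈ 𝓝[>] t := Ioo_mem_nhdsGT (by linarith)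
  obtain ⟨u₀, hu₀⟩ := nonempty_Ioo.mpr (show t - δ < t by linarith)
  obtain ⟨v₀, hv₀⟩ := nonempty_Ioo.mpr (show t < t + δ by linarith)
  have hcurv := K.eventually_curv_ne_zero hfin hcusp hacc
  have hsideL : ∀ᶠ u in 𝓝[<] t, H u ≠ 0 := by
    filter_upwards [hL] with u hu using left_ne_zero_of_mul (hopp u hu v₀ hv₀).ne
  have hsideR : ∀ᶠ v in 𝓝[>] t, H v ≠ 0 := by
    filter_upwards [hR] with v hv using right_ne_zero_of_mul (hopp u₀ hu₀ v hv).ne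
  refine ⟨posSign (H v₀), ?_⟩
  rw [← nhdsLT_sup_nhdsGT, eventually_sup]
  constructor
  · filter_upwards [K.eventually_side_mul_curv_neg_nhdsLT hcusp hacc
      (hcurv.filter_mono (nhdsLT_le_nhdsNE t)) hsideL, hL] with u hu huL
    exact posSign_eq_of_mul_pos
      (mul_pos_of_mul_mul_mul_pos (mul_pos_of_neg_of_neg hu (hopp u huL v₀ hv₀)))
  · filter_upwards [K.eventually_side_mul_curv_pos_nhdsGT hcusp hacc
      (hcurv.filter_mono (nhdsGT_le_nhdsNE t)) hsideR, hR] with v hv hvR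
    have hsame : 0 < H v * H v₀ := mul_pos_of_mul_mul_mul_pos
      (mul_pos_of_neg_of_neg (hopp u₀ hu₀ v hvR) (hopp u₀ hu₀ v₀ hv₀))
    exact posSign_eq_of_mul_pos (mul_pos_of_mul_mul_mul_pos (mul_pos hv hsame))

lemma tendsto_normalDir {l : Filter ℝ} (hl : l ≤ 𝓝 t) {T₀ : V3} {σ : ℝ}
    (hT : Tendsto K.unitTangent l (𝓝 T₀)) (hσ : ∀ᶠ u in l, posSign (K.curv u) = σ) :
    Tendsto K.normalDir l (𝓝 (σ • cross (K.γ t) T₀)) := by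
  refine ((((K.smooth.continuous.tendsto t).mono_left hl).cross hT).const_smul σ).congr' ?_
  filter_upwards [hσ] with u hu
  rw [normalDir, hu]

end RPCurve

theorem frame_coloring_through_type1_cusp_general (K : RPCurve) (hgen : K.IsGeneric) :
    ∀ t, K.IsCusp1 t →
      ∃ Tl Tr Nl Nr : V3,
        Filter.Tendsto K.unitTangent (𝓝[<] t) (𝓝 Tl) ∧
        Filter.Tendsto K.unitTangent (𝓝[>] t) (𝓝 Tr) ∧
        Filter.Tendsto K.normalDir (𝓝[<] t) (𝓝 Nl) ∧
        Filter.Tendsto K.normalDir (𝓝[>] t) (𝓝 Nr) ∧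
        Tl = -Tr ∧ Nl = -Nr ∧
        {x : V3 | 0 < ⟪Tl, x⟫ * ⟪Nl, x⟫} = {x : V3 | 0 < ⟪Tr, x⟫ * ⟪Nr, x⟫} := by
  intro t ht
  obtain ⟨σ, hσ⟩ := K.exists_eventually_posSign_curv_eq hgen.finite_infl ht
  have hTl := K.tendsto_unitTangent_nhdsLT ht.1 ht.2.1
  have hTr := K.tendsto_unitTangent_nhdsGT ht.1 ht.2.1
  refine ⟨_, _, _, _, hTl, hTr,
    K.tendsto_normalDir nhdsWithin_le_nhds hTl (hσ.filter_mono (nhdsLT_le_nhdsNE t)),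
    K.tendsto_normalDir nhdsWithin_le_nhds hTr (hσ.filter_mono (nhdsGT_le_nhdsNE t)),
    rfl, by rw [cross_neg_right, smul_neg], ?_⟩
  ext x
  simp [cross_neg_right]

/-- **The tangent-normal frame is well defined across type 1 cusps.**
Let `K` be a generic closed oriented singular curve in `ℝP²` whose only singularities are
cusps of type 1.  At a type 1 cusp, the orientations of the tangent geodesic `τ_p`
(recorded by the unit tangent) and of the normal geodesic `ν_p` (recorded by the unit
normal towards the centre of curvature) both reverse as the cusp is traversed, and
consequently the black-and-white colouring of the tangent-normal frame `F_p` is unchanged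
as `p` passes through the cusp point. -/
theorem frame_coloring_through_type1_cusp (K : RPCurve) (hgen : K.IsGeneric)
    (hcusp : ∀ t, K.IsCusp t → K.IsCusp1 t) :
    ∀ t, K.IsCusp1 t →
      ∃ Tl Tr Nl Nr : V3,
        Filter.Tendsto K.unitTangent (𝓝[<] t) (𝓝 Tl) ∧
        Filter.Tendsto K.unitTangent (𝓝[>] t) (𝓝 Tr) ∧
        Filter.Tendsto K.normalDir (𝓝[<] t) (𝓝 Nl) ∧
        Filter.Tendsto K.normalDir (𝓝[>] t) (𝓝 Nr) ∧
        Tl = -Tr ∧ Nl = -Nr ∧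
        {x : V3 | 0 < ⟪Tl, x⟫ * ⟪Nl, x⟫} = {x : V3 | 0 < ⟪Tr, x⟫ * ⟪Nr, x⟫} :=
  frame_coloring_through_type1_cusp_general K hgen

end
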